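/- arXiv:2005.11097 — 2 statements merged into one kernel-verified Lean document; each statement's English description precedes it below -/
import Mathlib

section
/- For every function f : ω → ω, the set of conditions (d, π, F) of the predictor forcing ℙ with f ∈ F is dense in ℙ: every condition of ℙ has an extension whose finite set of functions contains f. (This is the combinatorial core of the fact that ℙ adds a predictor predicting every ground model real.) -/
lemma getD_app_rep (l : List Bool) (k n : ℕ) :
    (l ++ List.replicate k false).getD n false = l.getD n false := by
  rcases lt_or_ge n l.length with h | h
  · rw [List.getD_eq_getElem?_getD, List.getD_eq_getElem?_getD,
      List.getElem?_append, if_pos h]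
  · rw [List.getD_eq_getElem?_getD, List.getD_eq_getElem?_getD,
      List.getElem?_eq_none h]
    rcases lt_or_ge n (l.length + k) with h2 | h2
    · rw [List.getElem?_eq_getElem (by simpa using h2)]
      simp [List.getElem_append_right h]
    · rw [List.getElem?_eq_none (by simpa using h2)]



/-- A condition of the predictor forcing `ℙ`: a triple `(d, π, F)` where `d ∈ 2^{<ω}`
(a finite binary sequence, coded as a `List Bool`), `π = ⟨π_n : n ∈ d⁻¹(1)⟩` with each
`π_n : ω^n → ω` (note that `d.getD n false = true` holds exactly when `n < |d|` and
`d(n) = 1`), and `F` is a finite set of functions in `ω^ω` any two distinct members of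
which differ at some coordinate below `|d|`. -/
structure PCond where
  d : List Bool
  pi : (n : ℕ) → d.getD n false = true → (Fin n → ℕ) → ℕ
  F : Set (ℕ → ℕ)
  finF : F.Finite
  sep : ∀ f ∈ F, ∀ g ∈ F, f ≠ g → ∃ n < d.length, f n ≠ g n

/-- The extension relation of `ℙ`: `(d', π', F') ≤ (d, π, F)` iff `d' ⊇ d`, `π' ⊇ π`,
`F' ⊇ F` and for every `f ∈ F` and every `n ∈ (d')⁻¹(1) \ d⁻¹(1)`,
`π'_n(f ↾ n) = f n`. -/
def PLE (p q : PCond) : Prop :=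
  q.d <+: p.d ∧
    (∀ n : ℕ, ∀ hq : q.d.getD n false = true, ∀ hp : p.d.getD n false = true,
      p.pi n hp = q.pi n hq) ∧
    q.F ⊆ p.F ∧
    ∀ f ∈ q.F, ∀ n : ℕ, q.d.getD n false = false →
      ∀ hp : p.d.getD n false = true, p.pi n hp (fun j : Fin n => f j) = f n

/-- For every `f : ω → ω`, the set of conditions of `ℙ` whose finite set of functions
contains `f` is dense in `ℙ`. -/
theorem stmt15 (f : ℕ → ℕ) (p : PCond) :
    ∃ q : PCond, PLE q p ∧ f ∈ q.F := by
  classical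
  -- witness function
  have hw : ∀ g : ℕ → ℕ, g ≠ f → ∃ n, g n ≠ f n := by
    intro g hg
    by_contra hc
    push_neg at hc
    exact hg (funext hc)
  set w : (ℕ → ℕ) → ℕ := fun g =>
    if h : g = f then 0 else Nat.find (hw g h) with hwdef
  obtain ⟨B, hB⟩ := (p.finF.image w).bddAbove
  set N := B + 1 with hN
  have hwlt : ∀ g ∈ p.F, w g < N := by
    intro g hg
    exact Nat.lt_succ_of_le (hB ⟨g, hg, rfl⟩)
  have hwspec : ∀ g, (h : g ≠ f) → g (w g) ≠ f (w g) := by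
    intro g h
    simp only [hwdef, dif_neg h]
    exact Nat.find_spec (hw g h)
  set d' := p.d ++ List.replicate N false with hd'
  have hget : ∀ n, d'.getD n false = p.d.getD n false := fun n => getD_app_rep _ _ _
  refine ⟨⟨d', fun n h => p.pi n ((hget n) ▸ h), insert f p.F, p.finF.insert f, ?_⟩,
    ⟨⟨_, rfl⟩, fun n hq hp => rfl, fun g hg => Set.mem_insert_of_mem _ hg,
      fun g hg n h0 hp => ?_⟩,
    Set.mem_insert _ _⟩
  · intro a ha b hb hab
    have hlen : d'.length = p.d.length + N := by simp [hd']
    rcases ha with rfl | ha <;> rcases hb with rfl | hb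
    · exact absurd rfl hab
    · have := hwlt b hb
      exact ⟨w b, by omega, (hwspec b (fun h => hab h.symm)).symm⟩
    · have := hwlt a ha
      exact ⟨w a, by omega, hwspec a hab⟩
    · obtain ⟨n, hn, hne⟩ := p.sep a ha b hb hab
      exact ⟨n, by omega, hne⟩
  · have hp' : d'.getD n false = true := hp
    rw [hget n, h0] at hp'
    exact absurd hp' (by simp)
end

section
/- For every n ∈ ω, the set of conditions (d, π, F) of the predictor forcing ℙ such that d^{-1}(1) has at least n elements is dense in ℙ: every condition of ℙ can be extended to one in which the set of coordinates where d takes value 1 has size at least n. (Hence the generic predictor has infinite domain.) -/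
noncomputable def predictFrom (F : Set (ℕ → ℕ)) (m : ℕ) (s : Fin m → ℕ) : ℕ :=
  open Classical in
  if h : ∃ f ∈ F, ∀ j : Fin m, f j = s j then h.choose m else 0

theorem predictFrom_eq_of_sep {F : Set (ℕ → ℕ)} {m : ℕ}
    (hsep : ∀ f ∈ F, ∀ g ∈ F, f ≠ g → ∃ k < m, f k ≠ g k) {f : ℕ → ℕ} (hf : f ∈ F) :
    predictFrom F m (fun j : Fin m => f j) = f m := by
  have hex : ∃ g ∈ F, ∀ j : Fin m, g j = f j := ⟨f, hf, fun _ => rfl⟩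
  rw [predictFrom, dif_pos hex]
  obtain ⟨hgF, hgf⟩ := hex.choose_spec
  by_contra hne
  obtain ⟨k, hk, hgk⟩ := hsep _ hgF f hf fun h => hne (congrFun h m)
  exact hgk (hgf ⟨k, hk⟩)

theorem List.lt_length_of_getD_false_eq_true {l : List Bool} {m : ℕ}
    (h : l.getD m false = true) : m < l.length := by
  by_contra hm
  rw [List.getD_eq_default _ _ (not_lt.mp hm)] at h
  exact Bool.false_ne_true h

namespace PCond

/-- On the new coordinates the predictor follows `F`, which is separated below `|d|` and hence
below every new coordinate. -/
noncomputable def extend (p : PCond) (e : List Bool) : PCond where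
  d := p.d ++ e
  pi m _ := if hm : p.d.getD m false = true then p.pi m hm else predictFrom p.F m
  F := p.F
  finF := p.finF
  sep f hf g hg hfg := by
    obtain ⟨k, hk, hne⟩ := p.sep f hf g hg hfg
    exact ⟨k, by simp only [List.length_append]; omega, hne⟩

theorem extend_le (p : PCond) (e : List Bool) : PLE (p.extend e) p := by
  refine ⟨List.prefix_append _ _, fun m hq _ => dif_pos hq, subset_rfl, ?_⟩
  intro f hf m hm0 hp
  have hlen : p.d.length ≤ m := by
    by_contra! hlt
    rw [extend, List.getD_append _ _ _ _ hlt, hm0] at hp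
    exact Bool.false_ne_true hp
  change (if hm : p.d.getD m false = true then p.pi m hm else predictFrom p.F m) _ = _
  rw [dif_neg (ne_true_of_eq_false hm0)]
  refine predictFrom_eq_of_sep (fun f hf g hg hfg => ?_) hf
  obtain ⟨k, hk, hne⟩ := p.sep f hf g hg hfg
  exact ⟨k, by omega, hne⟩

end PCond

theorem le_ncard_getD_append_replicate (d : List Bool) (n : ℕ) :
    n ≤ {m : ℕ | (d ++ List.replicate n true).getD m false = true}.ncard := by
  have hsub : (Finset.Ico d.length (d.length + n) : Set ℕ) ⊆
      {m : ℕ | (d ++ List.replicate n true).getD m false = true} := by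
    intro m hm
    simp only [Finset.coe_Ico, Set.mem_Ico] at hm
    change (d ++ _).getD m false = true
    rw [List.getD_append_right _ _ _ _ hm.1]
    simp [List.getD, show m - d.length < n by omega]
  have hfin : {m : ℕ | (d ++ List.replicate n true).getD m false = true}.Finite :=
    (Set.finite_Iio _).subset fun _ => List.lt_length_of_getD_false_eq_true
  calc n = (Finset.Ico d.length (d.length + n) : Set ℕ).ncard := by simp
    _ ≤ _ := Set.ncard_le_ncard hsub hfin

/-- For every `n`, the set of conditions `(d, π, F)` of `ℙ` such that `d⁻¹(1)` has at
least `n` elements is dense in `ℙ`. -/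
theorem stmt16 (n : ℕ) (p : PCond) :
    ∃ q : PCond, PLE q p ∧ n ≤ {m : ℕ | q.d.getD m false = true}.ncard :=
  ⟨p.extend (List.replicate n true), p.extend_le _, le_ncard_getD_append_replicate p.d n⟩
end
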